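/- arXiv:2112.03129 — 2 statements merged into one kernel-verified Lean document; each statement's English description precedes it below -/
import Mathlib

section
/- Let F : M_n(ℂ) → M_{kn}(ℂ) ≅ M_k(ℂ)⊗M_n(ℂ) be given by F(B) = 1_k⊗B, let ρ be a positive definite density matrix on M_{kn}(ℂ), and let σ ∈ M_n(ℂ) be the (positive definite) density matrix with tr(σB) = tr(ρ(1_k⊗B)) for all B. Then the following are equivalent: (a) there exists a UCP map G : M_{kn}(ℂ) → M_n(ℂ) such that tr(σG(A)) = tr(ρA) for all A ∈ M_{kn}(ℂ) and G(1_k⊗B) = B for all B ∈ M_n(ℂ) (a disintegration of (F, ω), which in this faithful case satisfies G∘F = id exactly); (b) there exists a positive definite density matrix τ ∈ M_k(ℂ) with ρ = τ⊗σ. -/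
/-!
(a) ⇒ (b): since `G` is UCP and restricts to a *-homomorphism on `1 ⊗ Mₙ`, these elements lie in
its multiplicative domain (Choi; here via positivity of the block matrix `[G (X_p* X_q)]` for
`X = (1, y, x)`). So `G` is a `1 ⊗ Mₙ`-bimodule map, `G (C ⊗ 1)` commutes with `Mₙ` and is a scalar
`φ C`, and `tr (ρ (C ⊗ B)) = φ C · tr (σ B)`. This forces `ρ = τ ⊗ σ` with `τ` the partial trace
of `ρ` over the second factor, which is positive definite along with `ρ`.

(b) ⇒ (a): take `G A = tr₁ ((τ ⊗ 1) A)`. Writing `τ = B* B`, `G` is the conjugation by `B* ⊗ 1`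
followed by the partial trace `tr₁`, hence CP.
-/

open Matrix Kronecker ComplexOrder

/-- The `k`-th amplification `id_{M_k(ℂ)} ⊗ Φ` of a map `Φ` between matrix algebras,
realized on matrices indexed by product types. -/
def amplify {n m : Type*} (Φ : Matrix n n ℂ → Matrix m m ℂ) (k : ℕ)
    (M : Matrix (Fin k × n) (Fin k × n) ℂ) : Matrix (Fin k × m) (Fin k × m) ℂ :=
  Matrix.of fun p q => Φ (Matrix.of fun a b => M (p.1, a) (q.1, b)) p.2 q.2

def IsCP {n m : Type*} [Fintype n] [Fintype m] (Φ : Matrix n n ℂ → Matrix m m ℂ) : Prop :=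
  ∀ (k : ℕ) (M : Matrix (Fin k × n) (Fin k × n) ℂ), M.PosSemidef → (amplify Φ k M).PosSemidef

namespace Matrix

variable {R : Type*} {m n : Type*}

def traceLeft [Semiring R] [Fintype m] : Matrix (m × n) (m × n) R →ₗ[R] Matrix n n R where
  toFun M := ∑ i, M.submatrix (Prod.mk i) (Prod.mk i)
  map_add' M N := by rw [← Finset.sum_add_distrib]; rfl
  map_smul' c M := by rw [RingHom.id_apply, Finset.smul_sum]; rfl

def traceRight [Semiring R] [Fintype n] (M : Matrix (m × n) (m × n) R) : Matrix m m R :=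
  traceLeft (M.submatrix Prod.swap Prod.swap)

section Semiring

variable [Semiring R]

theorem traceLeft_apply [Fintype m] (M : Matrix (m × n) (m × n) R) (a b : n) :
    traceLeft M a b = ∑ i, M (i, a) (i, b) := by
  simp [traceLeft, sum_apply]

theorem traceRight_apply [Fintype n] (M : Matrix (m × n) (m × n) R) (i j : m) :
    traceRight M i j = ∑ a, M (i, a) (j, a) := by
  simp [traceRight, traceLeft_apply]

theorem trace_traceLeft [Fintype m] [Fintype n] (M : Matrix (m × n) (m × n) R) :
    (traceLeft M).trace = M.trace := by
  simp only [trace, diag, traceLeft_apply, Fintype.sum_prod_type]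
  exact Finset.sum_comm

end Semiring

section CommSemiring

variable [CommSemiring R]

theorem traceLeft_kronecker [Fintype m] (C : Matrix m m R) (B : Matrix n n R) :
    traceLeft (C ⊗ₖ B) = C.trace • B := by
  ext a b
  simp [traceLeft_apply, trace, Finset.sum_mul]

theorem trace_mul_traceLeft [Fintype m] [Fintype n] [DecidableEq m] (B : Matrix n n R)
    (M : Matrix (m × n) (m × n) R) : (B * traceLeft M).trace = ((1 ⊗ₖ B) * M).trace := by
  simp only [trace, diag_apply, mul_apply, traceLeft_apply, Finset.mul_sum, kroneckerMap_apply,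
    one_apply, ite_mul, one_mul, zero_mul, Fintype.sum_prod_type, Finset.sum_ite_irrel,
    Finset.sum_const_zero, Finset.sum_ite_eq, Finset.mem_univ, ↓reduceIte]
  exact (Finset.sum_congr rfl fun _ _ => Finset.sum_comm).trans Finset.sum_comm

theorem traceLeft_kronecker_one_mul_comm [Fintype m] [Fintype n] [DecidableEq n] (X : Matrix m m R)
    (M : Matrix (m × n) (m × n) R) : traceLeft ((X ⊗ₖ 1) * M) = traceLeft (M * (X ⊗ₖ 1)) := by
  ext a b
  simp only [traceLeft_apply, mul_apply, kroneckerMap_apply, one_apply, mul_ite, mul_one, mul_zero,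
    ite_mul, zero_mul, Fintype.sum_prod_type, Finset.sum_ite_eq, Finset.mem_univ, ↓reduceIte,
    Finset.sum_ite_eq']
  rw [Finset.sum_comm]
  simp only [mul_comm]

theorem eq_traceRight_kronecker [Fintype m] [Fintype n] [DecidableEq m] [DecidableEq n]
    {ρ : Matrix (m × n) (m × n) R} {σ : Matrix n n R} (φ : Matrix m m R → R)
    (h : ∀ C B, (ρ * (C ⊗ₖ B)).trace = φ C * (σ * B).trace) (hσ : σ.trace = 1) :
    ρ = traceRight ρ ⊗ₖ σ := by
  have hρ : ∀ i a j b, ρ (i, a) (j, b) = φ (single j i 1) * σ a b := by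
    intro i a j b
    simpa [single_kronecker_single, trace_mul_single] using h (single j i 1) (single b a 1)
  ext ⟨i, a⟩ ⟨j, b⟩
  simp only [kroneckerMap_apply, traceRight_apply, hρ, ← Finset.mul_sum]
  simp only [trace, diag] at hσ
  rw [hσ, mul_one]

end CommSemiring

variable {𝕜 : Type*} [RCLike 𝕜]

theorem PosSemidef.traceLeft [Fintype m] {M : Matrix (m × n) (m × n) 𝕜} (hM : M.PosSemidef) :
    (traceLeft M).PosSemidef :=
  posSemidef_sum _ fun _ _ => hM.submatrix _

theorem PosDef.traceLeft [Fintype m] [Nonempty m] {M : Matrix (m × n) (m × n) 𝕜} (hM : M.PosDef) :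
    (traceLeft M).PosDef :=
  posDef_sum Finset.univ_nonempty fun i _ => hM.submatrix (Prod.mk_right_injective i)

theorem PosDef.traceRight [Fintype n] [Nonempty n] {M : Matrix (m × n) (m × n) 𝕜}
    (hM : M.PosDef) : (traceRight M).PosDef :=
  (hM.submatrix Prod.swap_injective).traceLeft

end Matrix

section CompletelyPositive

variable {ι κ m : Type*} [Fintype ι] [Fintype κ] [Fintype m]

theorem IsCP.comp {Φ : Matrix κ κ ℂ → Matrix m m ℂ} {Ψ : Matrix ι ι ℂ → Matrix κ κ ℂ}
    (hΦ : IsCP Φ) (hΨ : IsCP Ψ) : IsCP (Φ ∘ Ψ) :=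
  fun k M hM => hΦ k _ (hΨ k M hM)

theorem isCP_conjTranspose_mul_mul [DecidableEq ι] (V : Matrix ι m ℂ) :
    IsCP fun A : Matrix ι ι ℂ => Vᴴ * A * V := by
  intro k M hM
  have h : amplify (fun A : Matrix ι ι ℂ => Vᴴ * A * V) k M =
      ((1 : Matrix (Fin k) (Fin k) ℂ) ⊗ₖ V)ᴴ * M * ((1 : Matrix (Fin k) (Fin k) ℂ) ⊗ₖ V) := by
    ext ⟨p, a⟩ ⟨q, b⟩
    simp [amplify, mul_apply, Fintype.sum_prod_type, one_apply, apply_ite (starRingEnd ℂ)]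
  rw [h]
  exact hM.conjTranspose_mul_mul_same _

theorem isCP_traceLeft : IsCP (traceLeft : Matrix (ι × m) (ι × m) ℂ → Matrix m m ℂ) := by
  intro k M hM
  have h : amplify traceLeft k M =
      traceLeft (M.submatrix (fun x => (x.2.1, x.1, x.2.2)) fun x => (x.2.1, x.1, x.2.2)) := by
    ext p q
    simp [amplify, traceLeft_apply]
  rw [h]
  exact (hM.submatrix _).traceLeft

theorem posSemidef_blockGram {r : Type*} [Fintype r] (X : r → Matrix ι ι ℂ) :
    (of fun p q : r × ι => ((X p.1)ᴴ * X q.1) p.2 q.2).PosSemidef := by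
  convert posSemidef_conjTranspose_mul_self (of fun a (q : r × ι) => X q.1 a q.2)
  ext p q
  simp [mul_apply]

variable {Φ : Matrix ι ι ℂ → Matrix m m ℂ}

theorem IsCP.posSemidef_blocks (hΦ : IsCP Φ) {r : ℕ} (X : Fin r → Matrix ι ι ℂ) :
    (of fun p q : Fin r × m => Φ ((X p.1)ᴴ * X q.1) p.2 q.2).PosSemidef :=
  hΦ r _ (posSemidef_blockGram X)

variable [DecidableEq ι]

theorem IsCP.map_conjTranspose (hΦ : IsCP Φ) (x : Matrix ι ι ℂ) : Φ xᴴ = (Φ x)ᴴ := by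
  ext a b
  simpa using ((hΦ.posSemidef_blocks ![1, x]).isHermitian.apply (1, a) (0, b)).symm

variable [DecidableEq m]

theorem IsCP.map_conjTranspose_mul_eq (hΦ : IsCP Φ) (h1 : Φ 1 = 1) {x : Matrix ι ι ℂ}
    (hx : Φ (xᴴ * x) = (Φ x)ᴴ * Φ x) (y : Matrix ι ι ℂ) : Φ (yᴴ * x) = (Φ y)ᴴ * Φ x := by
  rw [← sub_eq_zero]
  set D := Φ (yᴴ * x) - (Φ y)ᴴ * Φ x
  refine ext_iff_mulVec.2 fun v => ?_
  set X : Fin 3 → Matrix ι ι ℂ := ![1, y, x]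
  set U : Fin 3 → m → ℂ := ![-(Φ x *ᵥ v), 0, v]
  set N := of fun p q : Fin 3 × m => Φ ((X p.1)ᴴ * X q.1) p.2 q.2
  have hblocks : ∀ p, ∑ q, Φ ((X p)ᴴ * X q) *ᵥ U q = ![0, D *ᵥ v, 0] p := by
    intro p
    fin_cases p <;> simp [X, U, D, Fin.sum_univ_three, h1, hΦ.map_conjTranspose, hx, sub_mulVec,
      ← mulVec_mulVec, mulVec_neg, neg_add_eq_sub]
  have hNu : ∀ p a, (N *ᵥ fun q => U q.1 q.2) (p, a) = ![0, D *ᵥ v, 0] p a := by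
    intro p a
    rw [← hblocks]
    simp [N, mulVec, dotProduct, Fintype.sum_prod_type, Finset.sum_apply]
  -- `N u` vanishes on the blocks where `u` does not, so `u* N u = 0` and hence `N u = 0`.
  have hzero : star (fun q => U q.1 q.2) ⬝ᵥ N *ᵥ (fun q => U q.1 q.2) = 0 := by
    simp only [dotProduct, Fintype.sum_prod_type, Fin.sum_univ_three, hNu]
    simp [U]
  have hN := ((hΦ.posSemidef_blocks X).dotProduct_mulVec_zero_iff _).1 hzero
  funext a
  have h := congrFun hN (1, a)
  rw [hNu] at h
  simpa using h

theorem IsCP.map_mul_eq_mul_map_right (hΦ : IsCP Φ) (h1 : Φ 1 = 1) {x : Matrix ι ι ℂ}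
    (hx : Φ (xᴴ * x) = (Φ x)ᴴ * Φ x) (y : Matrix ι ι ℂ) : Φ (y * x) = Φ y * Φ x := by
  simpa [hΦ.map_conjTranspose] using hΦ.map_conjTranspose_mul_eq h1 hx yᴴ

theorem IsCP.map_mul_eq_mul_map_left (hΦ : IsCP Φ) (h1 : Φ 1 = 1) {x : Matrix ι ι ℂ}
    (hx : Φ (x * xᴴ) = Φ x * (Φ x)ᴴ) (y : Matrix ι ι ℂ) : Φ (x * y) = Φ x * Φ y := by
  have hx' : Φ (xᴴᴴ * xᴴ) = (Φ xᴴ)ᴴ * Φ xᴴ := by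
    simpa [hΦ.map_conjTranspose] using hx
  calc Φ (x * y) = (Φ (yᴴ * xᴴ))ᴴ := by
        rw [← hΦ.map_conjTranspose, conjTranspose_mul, conjTranspose_conjTranspose,
          conjTranspose_conjTranspose]
    _ = Φ x * Φ y := by
        simp only [hΦ.map_mul_eq_mul_map_right h1 hx', conjTranspose_mul, hΦ.map_conjTranspose,
          conjTranspose_conjTranspose]

end CompletelyPositive

section SliceMaps

variable {l m : Type*} [Fintype l] [DecidableEq l] [Fintype m] [DecidableEq m]

open scoped MatrixOrder in
theorem isCP_traceLeft_kronecker_one_mul {τ : Matrix l l ℂ} (hτ : τ.PosSemidef) :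
    IsCP fun A : Matrix (l × m) (l × m) ℂ => traceLeft ((τ ⊗ₖ 1) * A) := by
  obtain ⟨B, rfl⟩ := CStarAlgebra.nonneg_iff_eq_star_mul_self.mp hτ.nonneg
  have h : (fun A : Matrix (l × m) (l × m) ℂ => traceLeft (((star B * B) ⊗ₖ 1) * A)) =
      traceLeft ∘ fun A => (Bᴴ ⊗ₖ (1 : Matrix m m ℂ))ᴴ * A * (Bᴴ ⊗ₖ 1) := by
    funext A
    rw [Function.comp_apply, ← traceLeft_kronecker_one_mul_comm, conjTranspose_kronecker,
      conjTranspose_conjTranspose, conjTranspose_one, ← mul_assoc, ← mul_kronecker_mul, mul_one,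
      star_eq_conjTranspose]
  rw [h]
  exact isCP_traceLeft.comp (isCP_conjTranspose_mul_mul _)

theorem IsCP.exists_map_kronecker_eq_smul {Φ : Matrix (l × m) (l × m) ℂ → Matrix m m ℂ}
    (hΦ : IsCP Φ) (h1 : Φ 1 = 1) (hF : ∀ B, Φ (1 ⊗ₖ B) = B) :
    ∃ φ : Matrix l l ℂ → ℂ, ∀ C B, Φ (C ⊗ₖ B) = φ C • B := by
  have hF_mul : ∀ B₁ B₂ : Matrix m m ℂ,
      Φ ((1 ⊗ₖ B₁) * (1 ⊗ₖ B₂)) = Φ (1 ⊗ₖ B₁) * Φ (1 ⊗ₖ B₂) := fun B₁ B₂ => by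
    rw [← mul_kronecker_mul, one_mul, hF, hF, hF]
  have hright : ∀ B y, Φ (y * (1 ⊗ₖ B)) = Φ y * B := fun B y => by
    rw [hΦ.map_mul_eq_mul_map_right h1 ?_ y, hF]
    rw [conjTranspose_kronecker, conjTranspose_one, hF_mul, hF, hF]
  have hleft : ∀ B y, Φ ((1 ⊗ₖ B) * y) = B * Φ y := fun B y => by
    rw [hΦ.map_mul_eq_mul_map_left h1 ?_ y, hF]
    rw [conjTranspose_kronecker, conjTranspose_one, hF_mul, hF, hF]
  have hcomm : ∀ C B, Commute B (Φ (C ⊗ₖ 1)) := fun C B => by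
    rw [Commute, SemiconjBy, ← hleft, ← hright, ← mul_kronecker_mul, ← mul_kronecker_mul,
      one_mul, mul_one, one_mul, mul_one]
  choose φ hφ using fun C =>
    mem_range_scalar_iff_commute_single'.2 fun i j => hcomm C (single i j 1)
  refine ⟨φ, fun C B => ?_⟩
  have hCB : C ⊗ₖ B = (C ⊗ₖ 1) * (1 ⊗ₖ B) := by rw [← mul_kronecker_mul, mul_one, one_mul]
  rw [hCB, hright, ← hφ, scalar_apply, ← smul_one_eq_diagonal, smul_mul_assoc, one_mul]

end SliceMaps

theorem stmt_2_general (k n : ℕ) (hn : 1 ≤ n)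
    (ρ : Matrix (Fin k × Fin n) (Fin k × Fin n) ℂ)
    (hρ : ρ.PosDef) (hρtr : ρ.trace = 1)
    (σ : Matrix (Fin n) (Fin n) ℂ)
    (hσ : ∀ B : Matrix (Fin n) (Fin n) ℂ,
      (σ * B).trace = (ρ * ((1 : Matrix (Fin k) (Fin k) ℂ) ⊗ₖ B)).trace) :
    (∃ G : Matrix (Fin k × Fin n) (Fin k × Fin n) ℂ →ₗ[ℂ] Matrix (Fin n) (Fin n) ℂ,
      IsCP (⇑G) ∧ G 1 = 1 ∧
      (∀ A : Matrix (Fin k × Fin n) (Fin k × Fin n) ℂ, (σ * G A).trace = (ρ * A).trace) ∧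
      (∀ B : Matrix (Fin n) (Fin n) ℂ, G ((1 : Matrix (Fin k) (Fin k) ℂ) ⊗ₖ B) = B)) ↔
    (∃ τ : Matrix (Fin k) (Fin k) ℂ, τ.PosDef ∧ τ.trace = 1 ∧ ρ = τ ⊗ₖ σ) := by
  have hσρ : σ = traceLeft ρ := ext_iff_trace_mul_left.2 fun B => by
    rw [trace_mul_comm, hσ, trace_mul_comm, trace_mul_traceLeft]
  have hσtr : σ.trace = 1 := by rw [hσρ, trace_traceLeft, hρtr]
  constructor
  · rintro ⟨G, hG, hG1, hGρ, hGF⟩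
    have : Nonempty (Fin n) := Fin.pos_iff_nonempty.1 hn
    obtain ⟨φ, hφ⟩ := hG.exists_map_kronecker_eq_smul hG1 hGF
    have hρτ : ρ = traceRight ρ ⊗ₖ σ := eq_traceRight_kronecker φ (fun C B => by
      rw [← hGρ, hφ, mul_smul_comm, trace_smul, smul_eq_mul]) hσtr
    refine ⟨traceRight ρ, hρ.traceRight, ?_, hρτ⟩
    have h := congrArg trace hρτ
    rwa [trace_kronecker, hσtr, mul_one, hρtr, eq_comm] at h
  · rintro ⟨τ, hτ, hτtr, rfl⟩
    have hslice : ∀ B : Matrix (Fin n) (Fin n) ℂ, traceLeft ((τ ⊗ₖ 1) * (1 ⊗ₖ B)) = B := fun B => by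
      rw [← mul_kronecker_mul, mul_one, one_mul, traceLeft_kronecker, hτtr, one_smul]
    refine ⟨traceLeft ∘ₗ LinearMap.mulLeft ℂ (τ ⊗ₖ 1),
      isCP_traceLeft_kronecker_one_mul hτ.posSemidef, by simpa using hslice 1, fun A => ?_, hslice⟩
    rw [LinearMap.comp_apply, LinearMap.mulLeft_apply, trace_mul_traceLeft, ← mul_assoc,
      ← mul_kronecker_mul, one_mul, mul_one]

/-- For `F(B) = 1_k ⊗ B` and a positive definite density matrix `ρ` on
`M_{kn}(ℂ)` with partial trace `σ`, the pair `(F, tr(ρ ·))` admits a disintegration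
(a state-preserving UCP left inverse `G` of `F`) iff `ρ = τ ⊗ σ` for some positive
definite density matrix `τ ∈ M_k(ℂ)`. -/
theorem stmt_2 (k n : ℕ) (hk : 1 ≤ k) (hn : 1 ≤ n)
    (ρ : Matrix (Fin k × Fin n) (Fin k × Fin n) ℂ)
    (hρ : ρ.PosDef) (hρtr : ρ.trace = 1)
    (σ : Matrix (Fin n) (Fin n) ℂ)
    (hσ : ∀ B : Matrix (Fin n) (Fin n) ℂ,
      (σ * B).trace = (ρ * ((1 : Matrix (Fin k) (Fin k) ℂ) ⊗ₖ B)).trace) :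
    (∃ G : Matrix (Fin k × Fin n) (Fin k × Fin n) ℂ →ₗ[ℂ] Matrix (Fin n) (Fin n) ℂ,
      IsCP (⇑G) ∧ G 1 = 1 ∧
      (∀ A : Matrix (Fin k × Fin n) (Fin k × Fin n) ℂ, (σ * G A).trace = (ρ * A).trace) ∧
      (∀ B : Matrix (Fin n) (Fin n) ℂ, G ((1 : Matrix (Fin k) (Fin k) ℂ) ⊗ₖ B) = B)) ↔
    (∃ τ : Matrix (Fin k) (Fin k) ℂ, τ.PosDef ∧ τ.trace = 1 ∧ ρ = τ ⊗ₖ σ) :=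
  stmt_2_general k n hn ρ hρ hρtr σ hσ
end

section
/- Let F : M_n(ℂ) → M_m(ℂ) be a UCP map, let σ ∈ M_n(ℂ) and ρ ∈ M_m(ℂ) be density matrices with tr(ρF(B)) = tr(σB) for all B, and let Q and R be the support projections of σ and ρ respectively. Suppose F̄ : M_m(ℂ) → M_n(ℂ) is a disintegration of (F, ω), i.e., F̄ is UCP, tr(σF̄(A)) = tr(ρA) for all A, and (F̄(F(B)) − B)Q = 0 for all B ∈ M_n(ℂ). Then the map G(A) := Q·F̄(RAR)·Q is a disintegration of the corner map B ↦ RF(QBQ)R with respect to the restricted faithful states: (1) tr(σ·G(A)) = tr(ρ·RAR) for all A ∈ M_m(ℂ); (2) G(R) = Q; (3) Q·F̄(R·F(QBQ)·R)·Q = QBQ for all B ∈ M_n(ℂ). -/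
open Matrix ComplexOrder

/-- `P` is the support projection of `σ`: the orthogonal projection (Hermitian idempotent)
whose range equals the range of `σ`. -/
def IsSupportProj {n : Type*} [Fintype n] [DecidableEq n] (P σ : Matrix n n ℂ) : Prop :=
  P.IsHermitian ∧ P * P = P ∧ LinearMap.range P.mulVecLin = LinearMap.range σ.mulVecLin

/-!
Part (2): `F̄(1 - R)` is positive and its `σ`-expectation is `tr(ρ(1 - R)) = 0`, so it vanishes on
the support of `σ`, i.e. `F̄(R)Q = Q`. Part (3): by 2-positivity, a compression `Vᴴ Φ(·) V` of a CP
map that kills the projection `1 - R` also kills `(1 - R)Y` and `Y(1 - R)`, hence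
`Q F̄(RXR) Q = Q F̄(X) Q`; with `X = F(QBQ)` the disintegration property gives `QBQ`.
Part (1) is the identity `tr(σ Q Y Q) = tr(σ Y)`.
-/

open scoped MatrixOrder Kronecker

namespace Matrix

variable {d : Type*} [Fintype d]

theorem PosSemidef.apply_eq_zero_of_apply_self_eq_zero {N : Matrix d d ℂ} (hN : N.PosSemidef)
    {r : d} (h : N r r = 0) (t : d) : N t r = 0 := by
  classical
  have hcol : N *ᵥ Pi.single r 1 = 0 :=
    (hN.dotProduct_mulVec_zero_iff _).1 (by simp [h])
  simpa [mulVec_single_one] using congrFun hcol t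

theorem PosSemidef.mul_eq_zero_of_trace_mul_eq_zero {σ X : Matrix d d ℂ} (hσ : σ.PosSemidef)
    (hX : X.PosSemidef) (h : (σ * X).trace = 0) : X * σ = 0 := by
  classical
  obtain ⟨s, rfl⟩ := CStarAlgebra.nonneg_iff_eq_star_mul_self.mp hσ.nonneg
  obtain ⟨x, rfl⟩ := CStarAlgebra.nonneg_iff_eq_star_mul_self.mp hX.nonneg
  simp only [star_eq_conjTranspose] at h ⊢
  have hsx : s * xᴴ = 0 := by
    rw [← trace_conjTranspose_mul_self_eq_zero_iff, conjTranspose_mul, conjTranspose_conjTranspose,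
      ← trace_mul_cycle, ← h]
    simp only [Matrix.mul_assoc]
  rw [Matrix.mul_assoc, ← Matrix.mul_assoc x, ← conjTranspose_conjTranspose (x * sᴴ),
    conjTranspose_mul, conjTranspose_conjTranspose, hsx]
  simp

end Matrix

namespace IsSupportProj

variable {d : Type*} [Fintype d] [DecidableEq d] {P σ : Matrix d d ℂ}

theorem isStarProjection (hP : IsSupportProj P σ) : IsStarProjection P :=
  ⟨hP.2.1, hP.1⟩

theorem mul_left_eq_self (hP : IsSupportProj P σ) : P * σ = σ := by
  refine Matrix.ext_iff_mulVec.2 fun v => ?_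
  obtain ⟨w, hw⟩ : σ *ᵥ v ∈ LinearMap.range P.mulVecLin := hP.2.2 ▸ ⟨v, rfl⟩
  rw [Matrix.mulVecLin_apply] at hw
  rw [← Matrix.mulVec_mulVec, ← hw, Matrix.mulVec_mulVec, hP.2.1]

theorem mul_right_eq_self (hP : IsSupportProj P σ) (hσ : σ.IsHermitian) : σ * P = σ := by
  simpa [hσ.eq, hP.1.eq] using congrArg (·ᴴ) hP.mul_left_eq_self

theorem mul_eq_zero_of_mul_eq_zero (hP : IsSupportProj P σ) {e : Type*} {X : Matrix e d ℂ}
    (h : X * σ = 0) : X * P = 0 := by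
  refine Matrix.ext_iff_mulVec.2 fun v => ?_
  obtain ⟨w, hw⟩ : P *ᵥ v ∈ LinearMap.range σ.mulVecLin := hP.2.2 ▸ ⟨v, rfl⟩
  rw [Matrix.mulVecLin_apply] at hw
  rw [← Matrix.mulVec_mulVec, ← hw, Matrix.mulVec_mulVec, h, Matrix.zero_mulVec,
    Matrix.zero_mulVec]

theorem trace_mul_compress (hP : IsSupportProj P σ) (hσ : σ.IsHermitian) (Y : Matrix d d ℂ) :
    (σ * (P * Y * P)).trace = (σ * Y).trace := by
  rw [← Matrix.mul_assoc, ← Matrix.mul_assoc, hP.mul_right_eq_self hσ, Matrix.trace_mul_cycle,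
    hP.mul_left_eq_self]

end IsSupportProj

namespace IsCP

variable {a b c : Type*} [Fintype a] [Fintype b] [Fintype c]

theorem posSemidef_map {Φ : Matrix a a ℂ → Matrix b b ℂ} (hΦ : IsCP Φ) {A : Matrix a a ℂ}
    (hA : A.PosSemidef) : (Φ A).PosSemidef :=
  (hΦ 1 _ (hA.submatrix Prod.snd)).submatrix fun p : b => ((0 : Fin 1), p)

theorem posSemidef_amplify_gram {Φ : Matrix a a ℂ → Matrix b b ℂ} (hΦ : IsCP Φ) {k : ℕ}
    (Z : Fin k → Matrix c a ℂ) :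
    (amplify Φ k (Matrix.of fun p q => ((Z p.1)ᴴ * Z q.1) p.2 q.2)).PosSemidef := by
  refine hΦ k _ ?_
  have hgram : (Matrix.of fun p q => ((Z p.1)ᴴ * Z q.1) p.2 q.2) =
      (Matrix.of fun r (q : Fin k × a) => Z q.1 r q.2)ᴴ *
        Matrix.of fun r (q : Fin k × a) => Z q.1 r q.2 := by
    ext p q
    simp [Matrix.mul_apply]
  rw [hgram]
  exact posSemidef_conjTranspose_mul_self _

theorem map_conjTranspose_mul_eq_zero {Φ : Matrix a a ℂ → Matrix b b ℂ} (hΦ : IsCP Φ)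
    {X : Matrix c a ℂ} (hX : Φ (Xᴴ * X) = 0) (Y : Matrix c a ℂ) :
    Φ (Xᴴ * Y) = 0 ∧ Φ (Yᴴ * X) = 0 := by
  -- the block matrix `[Φ(XᴴX), Φ(XᴴY); Φ(YᴴX), Φ(YᴴY)]` is PSD with a zero diagonal block
  have hN := hΦ.posSemidef_amplify_gram ![X, Y]
  have hentry (i j : Fin 2) (p q : b) :
      amplify Φ 2 (Matrix.of fun p q => ((![X, Y] p.1)ᴴ * ![X, Y] q.1) p.2 q.2) (i, p) (j, q) =
        Φ ((![X, Y] i)ᴴ * ![X, Y] j) p q := rfl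
  have hYX (p q : b) : Φ (Yᴴ * X) q p = 0 := by
    have := hN.apply_eq_zero_of_apply_self_eq_zero (r := (0, p)) (by rw [hentry]; simp [hX]) (1, q)
    simpa [hentry] using this
  refine ⟨Matrix.ext fun p q => ?_, Matrix.ext fun q p => hYX p q⟩
  have hsymm := hN.isHermitian.apply (0, p) (1, q)
  simp only [hentry] at hsymm
  simpa [hYX p q] using hsymm.symm

theorem compress {Φ : Matrix a a ℂ → Matrix b b ℂ} (hΦ : IsCP Φ) (V : Matrix b c ℂ) :
    IsCP fun M => Vᴴ * Φ M * V := by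
  classical
  intro k M hM
  let W : Matrix (Fin k × b) (Fin k × c) ℂ := 1 ⊗ₖ V
  have hblock : amplify (fun M => Vᴴ * Φ M * V) k M = Wᴴ * amplify Φ k M * W := by
    ext ⟨i, p⟩ ⟨j, q⟩
    simp [W, Matrix.mul_apply, amplify, one_apply, Fintype.sum_prod_type,
      apply_ite (starRingEnd ℂ), ite_mul]
  rw [hblock]
  exact (hΦ k M hM).conjTranspose_mul_mul_same _

theorem compress_map_corner_eq [DecidableEq a] {Φ : Matrix a a ℂ →ₗ[ℂ] Matrix b b ℂ}
    (hΦ : IsCP Φ) {R : Matrix a a ℂ} (hR : IsStarProjection R) {V : Matrix b c ℂ}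
    (h : Vᴴ * Φ (1 - R) * V = 0) (Y : Matrix a a ℂ) :
    Vᴴ * Φ (R * Y * R) * V = Vᴴ * Φ Y * V := by
  have hRc : (1 - R)ᴴ = 1 - R := hR.one_sub.isSelfAdjoint.star_eq
  have hkernel := (hΦ.compress V).map_conjTranspose_mul_eq_zero (X := 1 - R)
    (by rw [hRc, hR.one_sub.isIdempotentElem.eq]; exact h)
  have hleft : Vᴴ * Φ ((1 - R) * Y) * V = 0 := by simpa only [hRc] using (hkernel Y).1
  have hright : Vᴴ * Φ (R * Y * (1 - R)) * V = 0 := by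
    simpa only [conjTranspose_conjTranspose] using (hkernel (R * Y)ᴴ).2
  have hdecomp : R * Y * R = Y - (1 - R) * Y - R * Y * (1 - R) := by noncomm_ring
  rw [hdecomp, map_sub, map_sub, Matrix.mul_sub, Matrix.mul_sub, Matrix.sub_mul, Matrix.sub_mul,
    hleft, hright, sub_zero, sub_zero]

end IsCP

theorem stmt_14_general (n m : ℕ)
    (F : Matrix (Fin n) (Fin n) ℂ →ₗ[ℂ] Matrix (Fin m) (Fin m) ℂ)
    (σ : Matrix (Fin n) (Fin n) ℂ) (hσ : σ.PosSemidef)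
    (ρ : Matrix (Fin m) (Fin m) ℂ)
    (Q : Matrix (Fin n) (Fin n) ℂ) (hQ : IsSupportProj Q σ)
    (R : Matrix (Fin m) (Fin m) ℂ) (hR : IsSupportProj R ρ)
    (Fbar : Matrix (Fin m) (Fin m) ℂ →ₗ[ℂ] Matrix (Fin n) (Fin n) ℂ)
    (hFbarcp : IsCP (⇑Fbar)) (hFbaru : Fbar 1 = 1)
    (hFbarpres : ∀ A : Matrix (Fin m) (Fin m) ℂ, (σ * Fbar A).trace = (ρ * A).trace)
    (hFbardis : ∀ B : Matrix (Fin n) (Fin n) ℂ, (Fbar (F B) - B) * Q = 0) :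
    (∀ A : Matrix (Fin m) (Fin m) ℂ,
      (σ * (Q * Fbar (R * A * R) * Q)).trace = (ρ * (R * A * R)).trace) ∧
    Q * Fbar R * Q = Q ∧
    (∀ B : Matrix (Fin n) (Fin n) ℂ,
      Q * Fbar (R * F (Q * B * Q) * R) * Q = Q * B * Q) := by
  have hQQ : Q * Q = Q := hQ.isStarProjection.isIdempotentElem.eq
  have hvanish : Fbar (1 - R) * Q = 0 := by
    refine hQ.mul_eq_zero_of_mul_eq_zero (hσ.mul_eq_zero_of_trace_mul_eq_zero
      (hFbarcp.posSemidef_map hR.isStarProjection.one_sub_nonneg.posSemidef) ?_)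
    rw [hFbarpres, trace_mul_comm, Matrix.sub_mul, Matrix.one_mul, hR.mul_left_eq_self, sub_self,
      trace_zero]
  have hFbarR : Fbar R * Q = Q := by
    rwa [map_sub, hFbaru, Matrix.sub_mul, Matrix.one_mul, sub_eq_zero, eq_comm] at hvanish
  have hcorner : Qᴴ * Fbar (1 - R) * Q = 0 := by rw [Matrix.mul_assoc, hvanish, Matrix.mul_zero]
  refine ⟨fun A => ?_, by rw [Matrix.mul_assoc, hFbarR, hQQ], fun B => ?_⟩
  · rw [hQ.trace_mul_compress hσ.isHermitian, hFbarpres]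
  · have hdis : Fbar (F (Q * B * Q)) * Q = Q * B * Q := by
      have := hFbardis (Q * B * Q)
      rwa [Matrix.sub_mul, Matrix.mul_assoc (Q * B), hQQ, sub_eq_zero] at this
    have hcut := hFbarcp.compress_map_corner_eq hR.isStarProjection hcorner (F (Q * B * Q))
    rw [hQ.1.eq] at hcut
    rw [hcut, Matrix.mul_assoc, hdis, ← Matrix.mul_assoc, ← Matrix.mul_assoc, hQQ]

/-- If `F̄` is a disintegration of a state-preserving UCP map `F` (with
density matrices `σ`, `ρ` having support projections `Q`, `R`), then
`G(A) := Q·F̄(RAR)·Q` is a disintegration of the corner map `B ↦ RF(QBQ)R` with respect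
to the restricted faithful states. -/
theorem stmt_14 (n m : ℕ)
    (F : Matrix (Fin n) (Fin n) ℂ →ₗ[ℂ] Matrix (Fin m) (Fin m) ℂ)
    (hFcp : IsCP (⇑F)) (hFunital : F 1 = 1)
    (σ : Matrix (Fin n) (Fin n) ℂ) (hσ : σ.PosSemidef) (hσtr : σ.trace = 1)
    (ρ : Matrix (Fin m) (Fin m) ℂ) (hρ : ρ.PosSemidef) (hρtr : ρ.trace = 1)
    (hpres : ∀ B : Matrix (Fin n) (Fin n) ℂ, (ρ * F B).trace = (σ * B).trace)
    (Q : Matrix (Fin n) (Fin n) ℂ) (hQ : IsSupportProj Q σ)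
    (R : Matrix (Fin m) (Fin m) ℂ) (hR : IsSupportProj R ρ)
    (Fbar : Matrix (Fin m) (Fin m) ℂ →ₗ[ℂ] Matrix (Fin n) (Fin n) ℂ)
    (hFbarcp : IsCP (⇑Fbar)) (hFbaru : Fbar 1 = 1)
    (hFbarpres : ∀ A : Matrix (Fin m) (Fin m) ℂ, (σ * Fbar A).trace = (ρ * A).trace)
    (hFbardis : ∀ B : Matrix (Fin n) (Fin n) ℂ, (Fbar (F B) - B) * Q = 0) :
    (∀ A : Matrix (Fin m) (Fin m) ℂ,
      (σ * (Q * Fbar (R * A * R) * Q)).trace = (ρ * (R * A * R)).trace) ∧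
    Q * Fbar R * Q = Q ∧
    (∀ B : Matrix (Fin n) (Fin n) ℂ,
      Q * Fbar (R * F (Q * B * Q) * R) * Q = Q * B * Q) :=
  stmt_14_general n m F σ hσ ρ Q hQ R hR Fbar hFbarcp hFbaru hFbarpres hFbardis
end
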